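/- arXiv:2604.15161 — 8 statements merged into one kernel-verified Lean document; each statement's English description precedes it below -/
import Mathlib

section
/- Let m ≥ 1 and let a_1,…,a_{3m} be positive integers with Σ_{j=1}^{3m} a_j = mA, where A is a positive integer. Consider 3m activities with durations d_j = a_j, time horizon T = Σ_j d_j + m + 1 = m(A+1) + 1, and blocked times B = { t ∈ {0,…,T−1} : (A+1) divides t }. Then there exists an assignment of start times σ_j ∈ {0,…,T−1} such that the execution intervals [σ_j, σ_j + d_j) are pairwise disjoint, contained in [0, T), and contain no blocked time, if and only if {1,…,3m} can be partitioned into m subsets J_1,…,J_m with Σ_{j∈J_i} a_j = A for every i ∈ {1,…,m}. -/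
/-- Given `m ≥ 1` and positive integers `a₁, …, a_{3m}` summing to `m * A`,
consider `3m` activities with durations `d j = a j`, time horizon
`T = ∑ j d j + m + 1 = m * (A + 1) + 1` and blocked times
`B = { t ∈ {0, …, T-1} : (A+1) ∣ t }`.  There is an assignment of start times
`σ j ∈ {0, …, T-1}` such that the execution intervals `[σ j, σ j + d j)` are pairwise
disjoint, contained in `[0, T)` and contain no blocked time, if and only if
`{1, …, 3m}` can be partitioned into `m` subsets each with sum `A`. -/
theorem stmt_1 (m A : ℕ) (hm : 1 ≤ m) (hA : 0 < A)
    (a : Fin (3 * m) → ℕ) (hpos : ∀ j, 0 < a j)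
    (hsum : ∑ j, a j = m * A)
    (T : ℕ) (hT : T = m * (A + 1) + 1) :
    (∃ σ : Fin (3 * m) → ℕ,
      (∀ j, σ j + a j ≤ T) ∧
      (∀ i j, i ≠ j →
        Disjoint (Set.Ico (σ i) (σ i + a i)) (Set.Ico (σ j) (σ j + a j))) ∧
      (∀ j, ∀ t, σ j ≤ t → t < σ j + a j → ¬ (A + 1) ∣ t)) ↔
    (∃ f : Fin (3 * m) → Fin m,
      ∀ i : Fin m, ∑ j ∈ Finset.univ.filter (fun j => f j = i), a j = A) := by
  constructor
  · rintro ⟨σ, hbound, hdisj, hblock⟩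
    -- each start time is not a multiple of A+1
    have hmod : ∀ j, σ j % (A + 1) ≠ 0 := by
      intro j h
      exact hblock j (σ j) le_rfl (by have := hpos j; omega)
        (Nat.dvd_iff_mod_eq_zero.mpr h)
    -- the interval of j lies strictly inside the gap of its quotient
    have hlow : ∀ j, (σ j / (A + 1)) * (A + 1) + 1 ≤ σ j := by
      intro j
      have h1 := Nat.div_add_mod' (σ j) (A + 1)
      have h2 := hmod j
      omega
    have hhigh : ∀ j, σ j + a j ≤ (σ j / (A + 1) + 1) * (A + 1) := by
      intro j
      by_contra h
      push_neg at h
      have h1 := Nat.div_add_mod' (σ j) (A + 1)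
      have h2 : σ j % (A + 1) < A + 1 := Nat.mod_lt _ (by omega)
      have hmul : (σ j / (A + 1) + 1) * (A + 1) = (σ j / (A + 1)) * (A + 1) + (A + 1) := by
        ring
      exact hblock j ((σ j / (A + 1) + 1) * (A + 1)) (by omega) h
        (dvd_mul_left (A + 1) (σ j / (A + 1) + 1))
    have hqlt : ∀ j, σ j / (A + 1) < m := by
      intro j
      have h1 := hbound j
      have h2 := hlow j
      have h3 := hpos j
      have h4 : (σ j / (A + 1)) * (A + 1) < m * (A + 1) := by omega
      exact Nat.lt_of_mul_lt_mul_right h4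
    refine ⟨fun j => ⟨σ j / (A + 1), hqlt j⟩, ?_⟩
    set f : Fin (3 * m) → Fin m := fun j => ⟨σ j / (A + 1), hqlt j⟩ with hf
    -- each fiber sums to at most A
    have hle : ∀ i : Fin m,
        ∑ j ∈ Finset.univ.filter (fun j => f j = i), a j ≤ A := by
      intro i
      set s := Finset.univ.filter (fun j => f j = i) with hs
      have hcard : ∀ j, (Finset.Ico (σ j) (σ j + a j)).card = a j := by
        intro j; rw [Nat.card_Ico]; omega
      have hdisj' : ∀ x ∈ s, ∀ y ∈ s, x ≠ y →
          Disjoint (Finset.Ico (σ x) (σ x + a x)) (Finset.Ico (σ y) (σ y + a y)) := by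
        intro x _ y _ hxy
        rw [← Finset.disjoint_coe, Finset.coe_Ico, Finset.coe_Ico]
        exact hdisj x y hxy
      have h1 : ∑ j ∈ s, a j
          = (s.biUnion (fun j => Finset.Ico (σ j) (σ j + a j))).card := by
        rw [Finset.card_biUnion hdisj']
        exact (Finset.sum_congr rfl (fun j _ => (hcard j).symm))
      have hsub : s.biUnion (fun j => Finset.Ico (σ j) (σ j + a j))
          ⊆ Finset.Ico ((i : ℕ) * (A + 1) + 1) (((i : ℕ) + 1) * (A + 1)) := by
        intro t ht
        rw [Finset.mem_biUnion] at ht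
        obtain ⟨j, hj, htj⟩ := ht
        rw [hs, Finset.mem_filter] at hj
        have hji : σ j / (A + 1) = (i : ℕ) := by
          have := hj.2
          rw [hf] at this
          exact congrArg Fin.val this
        rw [Finset.mem_Ico] at htj ⊢
        have h2 := hlow j
        have h3 := hhigh j
        rw [hji] at h2 h3
        omega
      have h2 : (s.biUnion (fun j => Finset.Ico (σ j) (σ j + a j))).card
          ≤ (Finset.Ico ((i : ℕ) * (A + 1) + 1) (((i : ℕ) + 1) * (A + 1))).card :=
        Finset.card_le_card hsub
      rw [Nat.card_Ico] at h2
      have : ((i : ℕ) + 1) * (A + 1) - ((i : ℕ) * (A + 1) + 1) = A := by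
        have : ((i : ℕ) + 1) * (A + 1) = (i : ℕ) * (A + 1) + (A + 1) := by ring
        omega
      omega
    -- the total forces each fiber sum to equal A
    have htot : ∑ i : Fin m, ∑ j ∈ Finset.univ.filter (fun j => f j = i), a j
        = ∑ i : Fin m, A := by
      rw [Finset.sum_fiberwise, hsum, Finset.sum_const, Finset.card_univ,
        Fintype.card_fin, smul_eq_mul]
    intro i
    exact (Finset.sum_eq_sum_iff_of_le (fun i _ => hle i)).mp htot i (Finset.mem_univ i)
  · rintro ⟨f, hf⟩
    classical
    -- pack the activities of part i contiguously starting at i*(A+1)+1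
    set prev : Fin (3 * m) → ℕ :=
      fun j => ∑ k ∈ Finset.univ.filter (fun k => f k = f j ∧ k < j), a k with hprev
    set σ : Fin (3 * m) → ℕ :=
      fun j => (f j : ℕ) * (A + 1) + 1 + prev j with hσ
    have hfit : ∀ j, prev j + a j ≤ A := by
      intro j
      have hsub : insert j (Finset.univ.filter (fun k => f k = f j ∧ k < j))
          ⊆ Finset.univ.filter (fun k => f k = f j) := by
        intro k hk
        rw [Finset.mem_insert] at hk
        rcases hk with rfl | hk
        · simp
        · rw [Finset.mem_filter] at hk ⊢; exact ⟨hk.1, hk.2.1⟩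
      have hnm : j ∉ Finset.univ.filter (fun k => f k = f j ∧ k < j) := by
        simp
      calc prev j + a j
          = ∑ k ∈ insert j (Finset.univ.filter (fun k => f k = f j ∧ k < j)), a k := by
            rw [Finset.sum_insert hnm]; simp only [hprev]; omega
        _ ≤ ∑ k ∈ Finset.univ.filter (fun k => f k = f j), a k :=
            Finset.sum_le_sum_of_subset hsub
        _ = A := hf (f j)
    have hstep : ∀ i j : Fin (3 * m), f i = f j → i < j → prev i + a i ≤ prev j := by
      intro i j hfij hij
      have hsub : insert i (Finset.univ.filter (fun k => f k = f i ∧ k < i))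
          ⊆ Finset.univ.filter (fun k => f k = f j ∧ k < j) := by
        intro k hk
        rw [Finset.mem_insert] at hk
        rw [Finset.mem_filter]
        rcases hk with rfl | hk
        · exact ⟨Finset.mem_univ _, hfij, hij⟩
        · rw [Finset.mem_filter] at hk
          exact ⟨Finset.mem_univ _, hk.2.1.trans hfij, hk.2.2.trans hij⟩
      have hnm : i ∉ Finset.univ.filter (fun k => f k = f i ∧ k < i) := by simp
      calc prev i + a i
          = ∑ k ∈ insert i (Finset.univ.filter (fun k => f k = f i ∧ k < i)), a k := by
            rw [Finset.sum_insert hnm]; simp only [hprev]; omega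
        _ ≤ ∑ k ∈ Finset.univ.filter (fun k => f k = f j ∧ k < j), a k :=
            Finset.sum_le_sum_of_subset hsub
        _ = prev j := rfl
    have hend : ∀ j, σ j + a j ≤ ((f j : ℕ) + 1) * (A + 1) := by
      intro j
      have h1 := hfit j
      have : ((f j : ℕ) + 1) * (A + 1) = (f j : ℕ) * (A + 1) + (A + 1) := by ring
      simp only [hσ]
      omega
    have hsep : ∀ i j : Fin (3 * m), (f i : ℕ) < (f j : ℕ) → σ i + a i ≤ σ j := by
      intro i j hij
      have h1 := hend i
      have h2 : ((f i : ℕ) + 1) * (A + 1) ≤ (f j : ℕ) * (A + 1) :=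
        Nat.mul_le_mul_right _ (by omega)
      simp only [hσ] at h1 ⊢
      omega
    refine ⟨σ, ?_, ?_, ?_⟩
    · intro j
      have h1 := hend j
      have h2 : ((f j : ℕ) + 1) * (A + 1) ≤ m * (A + 1) :=
        Nat.mul_le_mul_right _ (by have := (f j).isLt; omega)
      omega
    · intro i j hij
      rw [Set.Ico_disjoint_Ico]
      have key : σ i + a i ≤ σ j ∨ σ j + a j ≤ σ i := by
        rcases lt_trichotomy ((f i : ℕ)) ((f j : ℕ)) with h | h | h
        · exact Or.inl (hsep i j h)
        · have hfij : f i = f j := Fin.ext h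
          rcases lt_trichotomy i j with h' | h' | h'
          · left
            have := hstep i j hfij h'
            simp only [hσ, hfij]
            omega
          · exact absurd h' hij
          · right
            have := hstep j i hfij.symm h'
            simp only [hσ, hfij]
            omega
        · exact Or.inr (hsep j i h)
      omega
    · intro j t h1 h2 hdvd
      obtain ⟨c, hc⟩ := hdvd
      have h3 := hend j
      have h4 : (f j : ℕ) * (A + 1) + 1 ≤ σ j := by simp only [hσ]; omega
      have h5 : (f j : ℕ) * (A + 1) < (A + 1) * c := by omega
      have h6 : (A + 1) * c < ((f j : ℕ) + 1) * (A + 1) := by omega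
      rw [mul_comm (A + 1) c] at h5 h6
      have h7 : (f j : ℕ) < c := Nat.lt_of_mul_lt_mul_right h5
      have h8 : c < (f j : ℕ) + 1 := Nat.lt_of_mul_lt_mul_right h6
      omega
end

section
/- Let c'^1,…,c'^K ∈ ℕ_0^n be K ≥ 1 scenarios, and let p, V' ∈ ℕ with p ≤ n. Set C = max{ ⌈V'/p⌉ + 1, max{ c'^k_i : i ∈ {1,…,n}, k ∈ {1,…,K} } }, define c^k_i = C − c'^k_i for all i, k, and set V = pC − V'. Then there exists a set S ⊆ {1,…,n} with |S| = p and max_{k∈{1,…,K}} Σ_{i∈S} c'^k_i ≤ V' if and only if there exists a set S ⊆ {1,…,n} with |S| = p and min_{k∈{1,…,K}} Σ_{i∈S} c^k_i ≥ V. -/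
/-- Correctness of the reduction from min-max selection to max-min
selection: with `C = max{⌈V'/p⌉ + 1, max_{i,k} c' k i}`, complemented costs
`c k i = C - c' k i` and threshold `V = p * C - V'`, there is a set `S` of `p`
indices with `max_k ∑_{i ∈ S} c' k i ≤ V'` iff there is a set `S` of `p` indices
with `min_k ∑_{i ∈ S} c k i ≥ V`. -/
theorem stmt_3 (n K p V' : ℕ) (hK : 1 ≤ K) (hp : 1 ≤ p) (hV' : 1 ≤ V') (hpn : p ≤ n)
    (c' : Fin K → Fin n → ℕ)
    (C : ℕ)
    (hC : C = max ((V' + p - 1) / p + 1)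
      (Finset.univ.sup fun k : Fin K => Finset.univ.sup (c' k)))
    (c : Fin K → Fin n → ℕ) (hc : ∀ k i, c k i = C - c' k i)
    (V : ℕ) (hV : V = p * C - V') :
    (∃ S : Finset (Fin n), S.card = p ∧ ∀ k, ∑ i ∈ S, c' k i ≤ V') ↔
    (∃ S : Finset (Fin n), S.card = p ∧ ∀ k, V ≤ ∑ i ∈ S, c k i) := by
  have hle : ∀ k i, c' k i ≤ C := by
    intro k i
    rw [hC]
    exact le_max_of_le_right <|
      le_trans (Finset.le_sup (Finset.mem_univ i))
        (Finset.le_sup (f := fun k : Fin K => Finset.univ.sup (c' k)) (Finset.mem_univ k))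
  -- V' ≤ p * C
  have hceil : V' ≤ p * ((V' + p - 1) / p + 1) := by
    have h1 : V' + p - 1 < p * ((V' + p - 1) / p + 1) := Nat.lt_mul_div_succ _ hp
    omega
  have hVpC : V' ≤ p * C := by
    have : (V' + p - 1) / p + 1 ≤ C := by rw [hC]; exact le_max_left _ _
    calc V' ≤ p * ((V' + p - 1) / p + 1) := hceil
      _ ≤ p * C := Nat.mul_le_mul_left _ this
  -- sum identity on sets of size p
  have hsum : ∀ (S : Finset (Fin n)), S.card = p → ∀ k,
      ∑ i ∈ S, c' k i + ∑ i ∈ S, c k i = p * C := by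
    intro S hS k
    rw [← Finset.sum_add_distrib]
    have heq : ∀ i ∈ S, c' k i + c k i = C := fun i _ => by
      rw [hc]; exact Nat.add_sub_cancel' (hle k i)
    rw [Finset.sum_congr rfl heq, Finset.sum_const, hS, smul_eq_mul]
  constructor
  · rintro ⟨S, hS, h⟩
    exact ⟨S, hS, fun k => by have := hsum S hS k; have := h k; omega⟩
  · rintro ⟨S, hS, h⟩
    exact ⟨S, hS, fun k => by have := hsum S hS k; have := h k; omega⟩
end

section
/- Let J be a finite set of activities with positive integer durations d_j and time horizon 𝒯 = {0,…,T−1}. Let x ∈ {0,1}^{J×𝒯} satisfy Σ_{t∈𝒯} x_{jt} = 1 for every j ∈ J, and let σ_j be the unique t with x_{jt} = 1. Then x satisfies d_j x_{jt} + Σ_{i∈J, i≠j} Σ_{s=t}^{min(t+d_j−1, T−1)} x_{is} ≤ d_j for all j ∈ J and t ∈ 𝒯, if and only if the execution intervals [σ_j, σ_j + d_j), j ∈ J, are pairwise disjoint. -/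
/-- For a binary time-indexed assignment `x` with `∑_{t < T} x j t = 1`
for every activity `j`, and induced start times `σ`, the non-overlap constraint family
`d j * x j t + ∑_{i ≠ j} ∑_{s = t}^{min(t + d j - 1, T - 1)} x i s ≤ d j` for all
`j ∈ J`, `t ∈ {0,…,T-1}` holds iff the execution intervals `[σ j, σ j + d j)` are
pairwise disjoint. -/
theorem stmt_5 {J : Type*} [Fintype J] [DecidableEq J]
    (T : ℕ) (hT : 0 < T) (d : J → ℕ) (hd : ∀ j, 0 < d j)
    (x : J → ℕ → ℕ) (hbin : ∀ j t, x j t = 0 ∨ x j t = 1)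
    (hsum : ∀ j, ∑ t ∈ Finset.range T, x j t = 1)
    (σ : J → ℕ) (hσT : ∀ j, σ j < T) (hσx : ∀ j, x j (σ j) = 1) :
    (∀ j : J, ∀ t ∈ Finset.range T,
        d j * x j t +
          ∑ i ∈ Finset.univ.erase j,
            ∑ s ∈ Finset.Icc t (min (t + d j - 1) (T - 1)), x i s ≤ d j) ↔
    (∀ i j : J, i ≠ j →
      Disjoint (Set.Ico (σ i) (σ i + d i)) (Set.Ico (σ j) (σ j + d j))) := by
  have hx : ∀ j t, t < T → x j t = 1 → t = σ j := by
    intro j t ht h1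
    by_contra hne
    have hsub : ({t, σ j} : Finset ℕ) ⊆ Finset.range T := by
      intro s hs
      simp only [Finset.mem_insert, Finset.mem_singleton] at hs
      rcases hs with rfl | rfl
      · exact Finset.mem_range.2 ht
      · exact Finset.mem_range.2 (hσT j)
    have h2 := Finset.sum_le_sum_of_subset hsub (f := x j)
    rw [Finset.sum_pair hne, h1, hσx j, hsum j] at h2
    omega
  have hxval : ∀ j t, t < T → x j t = if t = σ j then 1 else 0 := by
    intro j t ht
    by_cases h : t = σ j
    · simp [h, hσx j]
    · rcases hbin j t with h0 | h1
      · simp [h, h0]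
      · exact absurd (hx j t ht h1) h
  constructor
  · intro hcon i j hij
    have key : ∀ i j : J, i ≠ j → σ j ≤ σ i → σ i < σ j + d j → False := by
      intro i j hij hle hlt
      have ht := hcon j (σ j) (Finset.mem_range.2 (hσT j))
      have hmem : σ i ∈ Finset.Icc (σ j) (min (σ j + d j - 1) (T - 1)) := by
        have h1 := hσT i
        have h2 := hd j
        simp only [Finset.mem_Icc, le_min_iff]
        exact ⟨hle, by omega, by omega⟩
      have h3 : 1 ≤ ∑ s ∈ Finset.Icc (σ j) (min (σ j + d j - 1) (T - 1)), x i s := by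
        calc 1 = x i (σ i) := (hσx i).symm
        _ ≤ _ := Finset.single_le_sum (fun s _ => Nat.zero_le _) hmem
      have hge : 1 ≤ ∑ i' ∈ Finset.univ.erase j,
          ∑ s ∈ Finset.Icc (σ j) (min (σ j + d j - 1) (T - 1)), x i' s :=
        le_trans h3 (Finset.single_le_sum
          (f := fun i' => ∑ s ∈ Finset.Icc (σ j) (min (σ j + d j - 1) (T - 1)), x i' s)
          (fun _ _ => Nat.zero_le _)
          (Finset.mem_erase.2 ⟨hij, Finset.mem_univ i⟩))
      rw [hσx j, mul_one] at ht
      omega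
    rw [Set.disjoint_left]
    rintro u ⟨hi1, hi2⟩ ⟨hj1, hj2⟩
    rcases le_total (σ j) (σ i) with h | h
    · exact key i j hij h (by omega)
    · exact key j i hij.symm h (by omega)
  · intro hdisj j t ht
    rw [Finset.mem_range] at ht
    have hσne : ∀ i i' : J, i ≠ i' → σ i ≠ σ i' := by
      intro i i' hne heq
      have := Set.disjoint_left.1 (hdisj i i' hne)
        (Set.mem_Ico.2 ⟨le_refl _, by have := hd i; omega⟩)
      exact this (Set.mem_Ico.2 ⟨heq.ge, by have := hd i'; omega⟩)
    set m := min (t + d j - 1) (T - 1) with hm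
    have hinner : ∀ i : J, ∑ s ∈ Finset.Icc t m, x i s
        = if σ i ∈ Finset.Icc t m then 1 else 0 := by
      intro i
      rw [Finset.sum_congr rfl (fun s hs => hxval i s (by
        rw [Finset.mem_Icc] at hs; omega))]
      exact Finset.sum_ite_eq' _ _ (fun _ => 1)
    rcases hbin j t with h0 | h1
    · -- x j t = 0 case
      rw [h0, mul_zero, zero_add]
      have hcard : ∑ i ∈ Finset.univ.erase j, ∑ s ∈ Finset.Icc t m, x i s
          = ((Finset.univ.erase j).filter (fun i => σ i ∈ Finset.Icc t m)).card := by
        rw [Finset.sum_congr rfl (fun i _ => hinner i), ← Finset.sum_filter,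
          Finset.sum_const, smul_eq_mul, mul_one]
      rw [hcard]
      calc ((Finset.univ.erase j).filter (fun i => σ i ∈ Finset.Icc t m)).card
          ≤ (Finset.Icc t m).card := by
            apply Finset.card_le_card_of_injOn σ
            · intro i hi
              exact (Finset.mem_filter.1 hi).2
            · intro a ha b hb hab
              by_contra hne
              exact hσne a b hne hab
        _ ≤ d j := by
            rw [Nat.card_Icc]
            have := hd j
            omega
    · -- x j t = 1 case: t = σ j
      have htσ : t = σ j := hx j t ht h1
      rw [h1, mul_one]
      have hzero : ∀ i ∈ Finset.univ.erase j, ∑ s ∈ Finset.Icc t m, x i s = 0 := by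
        intro i hi
        rw [hinner i, if_neg]
        intro hmem
        rw [Finset.mem_Icc] at hmem
        have hne : i ≠ j := (Finset.mem_erase.1 hi).1
        have := Set.disjoint_left.1 (hdisj i j hne)
          (Set.mem_Ico.2 ⟨le_refl _, by have := hd i; omega⟩)
        apply this
        refine Set.mem_Ico.2 ⟨by omega, ?_⟩
        have h2 := hd j
        have h3 : m ≤ t + d j - 1 := min_le_left _ _
        omega
      rw [Finset.sum_eq_zero hzero]
      omega
end

section
/- Let J be a finite set of activities with positive integer durations d_j and time horizon 𝒯 = {0,…,T−1}. Let x ∈ {0,1}^{J×𝒯} satisfy Σ_{t∈𝒯} x_{jt} = 1 for every j ∈ J, with induced start times σ_j, and let i, j ∈ J be distinct. Then x satisfies Σ_{s=t}^{T−1} x_{is} + Σ_{s=0}^{min(t+d_i−1, T−1)} x_{js} ≤ 1 for all t ∈ 𝒯 if and only if σ_i + d_i ≤ σ_j, i.e., activity i completes no later than activity j starts. -/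
/-- For a binary time-indexed assignment `x` with `∑_{t < T} x j t = 1`
for every activity, induced start times `σ`, and distinct activities `i, j`, the
precedence constraint family
`∑_{s = t}^{T-1} x i s + ∑_{s = 0}^{min(t + d i - 1, T - 1)} x j s ≤ 1` for all
`t ∈ {0,…,T-1}` holds iff `σ i + d i ≤ σ j`, i.e. activity `i` completes no later
than activity `j` starts. -/
theorem stmt_6 {J : Type*} [Fintype J]
    (T : ℕ) (hT : 0 < T) (d : J → ℕ) (hd : ∀ j, 0 < d j)
    (x : J → ℕ → ℕ) (hbin : ∀ j t, x j t = 0 ∨ x j t = 1)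
    (hsum : ∀ j, ∑ t ∈ Finset.range T, x j t = 1)
    (σ : J → ℕ) (hσT : ∀ j, σ j < T) (hσx : ∀ j, x j (σ j) = 1)
    (i j : J) (hij : i ≠ j) :
    (∀ t ∈ Finset.range T,
        (∑ s ∈ Finset.Icc t (T - 1), x i s) +
          ∑ s ∈ Finset.Icc 0 (min (t + d i - 1) (T - 1)), x j s ≤ 1) ↔
    σ i + d i ≤ σ j := by
  -- x k t = 0 for t < T, t ≠ σ k
  have key : ∀ k t, t < T → t ≠ σ k → x k t = 0 := by
    intro k t ht hne
    rcases hbin k t with h | h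
    · exact h
    · exfalso
      have hpair : ({t, σ k} : Finset ℕ) ⊆ Finset.range T := by
        intro a ha
        simp only [Finset.mem_insert, Finset.mem_singleton] at ha
        rcases ha with rfl | rfl
        · exact Finset.mem_range.mpr ht
        · exact Finset.mem_range.mpr (hσT k)
      have h2 : ∑ s ∈ ({t, σ k} : Finset ℕ), x k s ≤ ∑ s ∈ Finset.range T, x k s :=
        Finset.sum_le_sum_of_subset hpair
      rw [Finset.sum_pair hne, h, hσx k, hsum k] at h2
      omega
  -- sum over a subset S of range T
  have sumS : ∀ k, ∀ S : Finset ℕ, S ⊆ Finset.range T →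
      ∑ s ∈ S, x k s = if σ k ∈ S then 1 else 0 := by
    intro k S hS
    have : ∑ s ∈ S, x k s = ∑ s ∈ S, if s = σ k then 1 else 0 := by
      apply Finset.sum_congr rfl
      intro s hs
      by_cases h : s = σ k
      · simp [h, hσx k]
      · simp [h, key k s (Finset.mem_range.mp (hS hs)) h]
    rw [this, Finset.sum_ite_eq' S (σ k) (fun _ => 1)]
  constructor
  · intro hcon
    have h1 := hcon (σ i) (Finset.mem_range.mpr (hσT i))
    have hIcc : Finset.Icc (σ i) (T - 1) ⊆ Finset.range T := by
      intro a ha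
      rw [Finset.mem_Icc] at ha
      exact Finset.mem_range.mpr (by omega)
    have hIcc2 : Finset.Icc 0 (min (σ i + d i - 1) (T - 1)) ⊆ Finset.range T := by
      intro a ha
      rw [Finset.mem_Icc] at ha
      have := hσT j
      exact Finset.mem_range.mpr (by omega)
    rw [sumS i _ hIcc, sumS j _ hIcc2] at h1
    have hmem : σ i ∈ Finset.Icc (σ i) (T - 1) := by
      rw [Finset.mem_Icc]
      have := hσT i; omega
    rw [if_pos hmem] at h1
    have hnmem : σ j ∉ Finset.Icc 0 (min (σ i + d i - 1) (T - 1)) := by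
      intro hm
      rw [if_pos hm] at h1
      omega
    rw [Finset.mem_Icc] at hnmem
    have := hσT j
    have := hd i
    omega
  · intro hle t ht
    rw [Finset.mem_range] at ht
    have hIcc : Finset.Icc t (T - 1) ⊆ Finset.range T := by
      intro a ha
      rw [Finset.mem_Icc] at ha
      exact Finset.mem_range.mpr (by omega)
    have hIcc2 : Finset.Icc 0 (min (t + d i - 1) (T - 1)) ⊆ Finset.range T := by
      intro a ha
      rw [Finset.mem_Icc] at ha
      exact Finset.mem_range.mpr (by omega)
    rw [sumS i _ hIcc, sumS j _ hIcc2]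
    by_cases h1 : σ i ∈ Finset.Icc t (T - 1) <;>
      by_cases h2 : σ j ∈ Finset.Icc 0 (min (t + d i - 1) (T - 1)) <;>
      simp only [h1, h2, if_pos, if_neg, if_true, if_false]
    · exfalso
      rw [Finset.mem_Icc] at h1 h2
      have := hd i
      omega
    all_goals omega
end

section
/- Let J be a finite set with positive integer durations d_j, time horizon 𝒯 = {0,…,T−1}, and P ⊆ J×J a set of precedence pairs. Consider the polytope Q of all x ∈ ℝ^{J×𝒯} with x_{jt} ≥ 0 for all j, t, Σ_{t∈𝒯} x_{jt} = 1 for all j ∈ J, and Σ_{s=t}^{T−1} x_{is} + Σ_{s=0}^{min(t+d_i−1,T−1)} x_{js} ≤ 1 for all (i,j) ∈ P and all t ∈ 𝒯. Then every extreme point of Q has all coordinates in {0,1}; consequently, for every cost matrix c ∈ ℝ^{J×𝒯}, if Q is nonempty then the minimum of Σ_{j,t} c_{jt} x_{jt} over Q is attained at some binary x. -/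
/-- The feasible polytope `Q` of the time-indexed project scheduling problem with
start-time dependent costs: nonnegative `x : J → Fin T → ℝ`, each row summing to one,
and the precedence inequalities for every pair `(i, j) ∈ P` and time `t`. -/
def schedulingPolytope {J : Type*} [Fintype J] (T : ℕ) (d : J → ℕ)
    (P : Set (J × J)) : Set (J → Fin T → ℝ) :=
  { x | (∀ j t, 0 ≤ x j t) ∧ (∀ j, ∑ t, x j t = 1) ∧
    ∀ q ∈ P, ∀ t : Fin T,
      (∑ s ∈ Finset.univ.filter (fun s : Fin T => (t : ℕ) ≤ (s : ℕ)), x q.1 s) +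
        (∑ s ∈ Finset.univ.filter
            (fun s : Fin T => (s : ℕ) ≤ min ((t : ℕ) + d q.1 - 1) (T - 1)), x q.2 s) ≤ 1 }

/-!
Let `s j` be the first slot in which row `j` of `x ∈ Q` carries positive mass, and let `a` be the
smallest of the masses `x j (s j)`. Starting every activity `j` at `s j` gives a binary point `y`
of `Q`: if `s i` lay at or after `t` and `s j` at or before `t + d i - 1`, the tail of row `i` from
`t` would carry all its mass `1` and the head of row `j` the positive mass `x j (s j)`. When `x` is not binary, `a < 1` and `x = a • y + (1 - a) • z` with `z ∈ Q` whose support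
misses the slot `(j₀, s j₀)` attaining `a`. By induction on the support, `Q` lies in the convex
hull of its finitely many binary points; hence non-binary points are not extreme, and a linear
objective is minimised over `Q` at a binary point.
-/

open Finset

namespace SchedulingPolytope

section Row

variable {ι : Type*} {v : ι → ℝ}

lemma exists_pos_forall_lt_eq_zero [Fintype ι] [LinearOrder ι] (hv0 : ∀ u, 0 ≤ v u)
    (hv1 : ∑ u, v u = 1) :
    ∃ s, 0 < v s ∧ ∀ u < s, v u = 0 := by
  have hne : (univ.filter fun u => 0 < v u).Nonempty := by
    by_contra h
    have : ∑ u, v u = 0 :=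
      sum_eq_zero fun u _ => le_antisymm (not_lt.1 fun hu => h ⟨u, by simpa using hu⟩) (hv0 u)
    linarith
  refine ⟨_, (mem_filter.1 (min'_mem _ hne)).2, fun u hu => ?_⟩
  refine le_antisymm (not_lt.1 fun hpos => ?_) (hv0 u)
  exact (min'_le _ u (by simpa using hpos)).not_gt hu

lemma sum_eq_zero_of_isLowerSet [LinearOrder ι] {s : ι} (hs : ∀ u < s, v u = 0) {B : Finset ι}
    (hB : IsLowerSet (B : Set ι)) (hsB : s ∉ B) : ∑ u ∈ B, v u = 0 :=
  sum_eq_zero fun u hu => hs u (lt_of_not_ge fun hsu => hsB (hB hsu hu))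

lemma sum_eq_one_of_isUpperSet [Fintype ι] [LinearOrder ι] (hv1 : ∑ u, v u = 1) {s : ι}
    (hs : ∀ u < s, v u = 0) {A : Finset ι} (hA : IsUpperSet (A : Set ι)) (hsA : s ∈ A) :
    ∑ u ∈ A, v u = 1 := by
  have hAc : ∑ u ∈ Aᶜ, v u = 0 :=
    sum_eq_zero_of_isLowerSet hs (by simpa using hA.compl) (by simpa using hsA)
  rw [← hv1, ← sum_compl_add_sum A, hAc, zero_add]

lemma sum_add_le_one_of_notMem [Fintype ι] [DecidableEq ι] (hv0 : ∀ u, 0 ≤ v u)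
    (hv1 : ∑ u, v u = 1) {A : Finset ι} {s : ι} (hsA : s ∉ A) : ∑ u ∈ A, v u + v s ≤ 1 := by
  rw [← hv1, add_comm, ← sum_insert hsA]
  exact sum_le_univ_sum_of_nonneg hv0

lemma lt_one_of_ne_zero_of_ne_one [Fintype ι] (hv0 : ∀ u, 0 ≤ v u) (hv1 : ∑ u, v u = 1) {u : ι}
    (h0 : v u ≠ 0) (h1 : v u ≠ 1) (s : ι) : v s < 1 := by
  have hu : 0 < v u := (hv0 u).lt_of_ne' h0
  rcases eq_or_ne s u with rfl | hsu
  · exact (hv1 ▸ single_le_sum (fun u _ => hv0 u) (mem_univ s)).lt_of_ne h1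
  · linarith [hv1 ▸ add_le_sum (fun u _ => hv0 u) (mem_univ s) (mem_univ u) hsu]

end Row

variable {J : Type*} {T : ℕ}

def slotsFrom (t : ℕ) : Finset (Fin T) := univ.filter fun s => t ≤ (s : ℕ)

def slotsUpTo (m : ℕ) : Finset (Fin T) := univ.filter fun s => (s : ℕ) ≤ m

lemma isUpperSet_slotsFrom (t : ℕ) : IsUpperSet (↑(slotsFrom (T := T) t) : Set (Fin T)) := by
  intro a b hab ha
  simp only [slotsFrom, coe_filter, mem_univ, true_and, Set.mem_ofPred_eq] at ha ⊢
  exact ha.trans hab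

lemma isLowerSet_slotsUpTo (m : ℕ) : IsLowerSet (↑(slotsUpTo (T := T) m) : Set (Fin T)) := by
  intro a b hab ha
  simp only [slotsUpTo, coe_filter, mem_univ, true_and, Set.mem_ofPred_eq] at ha ⊢
  exact (Fin.le_def.1 hab).trans ha

def precedenceSum (d : J → ℕ) (i j : J) (t : Fin T) : (J → Fin T → ℝ) →ₗ[ℝ] ℝ where
  toFun x := ∑ s ∈ slotsFrom t, x i s + ∑ s ∈ slotsUpTo (min (t + d i - 1) (T - 1)), x j s
  map_add' x y := by simp only [Pi.add_apply, sum_add_distrib]; ring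
  map_smul' a x := by simp only [Pi.smul_apply, smul_eq_mul, ← mul_sum, RingHom.id_apply]; ring

lemma mem_schedulingPolytope_iff [Fintype J] {d : J → ℕ} {P : Set (J × J)} {x : J → Fin T → ℝ} :
    x ∈ schedulingPolytope T d P ↔ (∀ j t, 0 ≤ x j t) ∧ (∀ j, ∑ t, x j t = 1) ∧
      ∀ q ∈ P, ∀ t, precedenceSum d q.1 q.2 t x ≤ 1 :=
  Iff.rfl

def scheduleAt (s : J → Fin T) : J → Fin T → ℝ := fun j => Pi.single (s j) 1

lemma precedenceSum_scheduleAt (d : J → ℕ) (s : J → Fin T) (i j : J) (t : Fin T) :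
    precedenceSum d i j t (scheduleAt s) =
      (if s i ∈ slotsFrom t then 1 else 0) +
        if s j ∈ slotsUpTo (min (t + d i - 1) (T - 1)) then 1 else 0 := by
  simp [precedenceSum, scheduleAt, sum_pi_single']

def binaryPoints [Fintype J] (T : ℕ) (d : J → ℕ) (P : Set (J × J)) : Set (J → Fin T → ℝ) :=
  {y ∈ schedulingPolytope T d P | ∀ j t, y j t = 0 ∨ y j t = 1}

section FirstSlots

variable [Fintype J] {d : J → ℕ} {P : Set (J × J)} {x : J → Fin T → ℝ} {s : J → Fin T}

lemma notMem_slotsUpTo_of_mem_slotsFrom (hx : x ∈ schedulingPolytope T d P)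
    (hs : ∀ j, ∀ u < s j, x j u = 0) (hpos : ∀ j, 0 < x j (s j)) {i j : J} (hij : (i, j) ∈ P)
    {t : Fin T} (hi : s i ∈ slotsFrom t) : s j ∉ slotsUpTo (min (t + d i - 1) (T - 1)) := by
  intro hj
  have hfrom : ∑ u ∈ slotsFrom t, x i u = 1 :=
    sum_eq_one_of_isUpperSet (hx.2.1 i) (hs i) (isUpperSet_slotsFrom t) hi
  have hupto : x j (s j) ≤ ∑ u ∈ slotsUpTo (min (t + d i - 1) (T - 1)), x j u :=
    single_le_sum (fun u _ => hx.1 j u) hj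
  have hprec := (mem_schedulingPolytope_iff.1 hx).2.2 (i, j) hij t
  simp only [precedenceSum, LinearMap.coe_mk, AddHom.coe_mk] at hprec
  linarith [hpos j]

lemma scheduleAt_mem_binaryPoints (hx : x ∈ schedulingPolytope T d P)
    (hs : ∀ j, ∀ u < s j, x j u = 0) (hpos : ∀ j, 0 < x j (s j)) :
    scheduleAt s ∈ binaryPoints T d P := by
  have hbin : ∀ j t, scheduleAt s j t = 0 ∨ scheduleAt s j t = 1 := by
    intro j t
    by_cases h : t = s j <;> simp [scheduleAt, h]
  refine ⟨mem_schedulingPolytope_iff.2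
    ⟨fun j t => ?_, fun j => by simp [scheduleAt], fun ⟨i, j⟩ hq t => ?_⟩, hbin⟩
  · rcases hbin j t with h | h <;> simp [h]
  · have hP := notMem_slotsUpTo_of_mem_slotsFrom hx hs hpos hq (t := t)
    rw [precedenceSum_scheduleAt]
    split_ifs with hi hj <;> first | exact absurd hj (hP hi) | norm_num

lemma smul_sub_scheduleAt_mem (hx : x ∈ schedulingPolytope T d P)
    (hs : ∀ j, ∀ u < s j, x j u = 0) (hpos : ∀ j, 0 < x j (s j)) {a : ℝ}
    (ha : ∀ j, a ≤ x j (s j)) (ha1 : a < 1) :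
    (1 - a)⁻¹ • (x - a • scheduleAt s) ∈ schedulingPolytope T d P := by
  have h1a : 0 < 1 - a := by linarith
  refine mem_schedulingPolytope_iff.2 ⟨fun j t => ?_, fun j => ?_, fun ⟨i, j⟩ hq t => ?_⟩
  · simp only [Pi.smul_apply, Pi.sub_apply, smul_eq_mul]
    refine mul_nonneg (inv_nonneg.2 h1a.le) (sub_nonneg.2 ?_)
    by_cases h : t = s j
    · subst h
      simpa [scheduleAt] using ha j
    · simpa [scheduleAt, h] using hx.1 j t
  · simp [scheduleAt, sum_sub_distrib, ← mul_sum, hx.2.1 j, h1a.ne']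
  · rw [map_smul, map_sub, map_smul, precedenceSum_scheduleAt, smul_eq_mul, smul_eq_mul,
      inv_mul_le_iff₀ h1a]
    have hprec := (mem_schedulingPolytope_iff.1 hx).2.2 (i, j) hq t
    split_ifs with hi hj hj
    · exact absurd hj (notMem_slotsUpTo_of_mem_slotsFrom hx hs hpos hq hi)
    · linarith
    · linarith
    -- `s i` lies before `t`, so the tail sum of row `i` misses the mass `x i (s i) ≥ a`.
    · have hfrom := sum_add_le_one_of_notMem (hx.1 i) (hx.2.1 i) hi
      have hupto := sum_eq_zero_of_isLowerSet (hs j) (isLowerSet_slotsUpTo _) hj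
      simp only [precedenceSum, LinearMap.coe_mk, AddHom.coe_mk] at hprec ⊢
      linarith [ha i]

end FirstSlots

lemma exists_binaryPoints_openSegment [Fintype J] {d : J → ℕ} {P : Set (J × J)}
    {x : J → Fin T → ℝ} (hx : x ∈ schedulingPolytope T d P)
    (hnb : ¬ ∀ j t, x j t = 0 ∨ x j t = 1) :
    ∃ y ∈ binaryPoints T d P, ∃ z ∈ schedulingPolytope T d P, ∃ a : ℝ, 0 < a ∧ a < 1 ∧
      x = a • y + (1 - a) • z ∧ (Function.uncurry z).support ⊂ (Function.uncurry x).support := by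
  choose s hpos hs using fun j => exists_pos_forall_lt_eq_zero (hx.1 j) (hx.2.1 j)
  push Not at hnb
  obtain ⟨j₁, t₁, h0, h1⟩ := hnb
  have : Nonempty J := ⟨j₁⟩
  obtain ⟨j₀, hj₀⟩ := Finite.exists_min fun j => x j (s j)
  set a := x j₀ (s j₀)
  have ha1 : a < 1 :=
    (hj₀ j₁).trans_lt (lt_one_of_ne_zero_of_ne_one (hx.1 j₁) (hx.2.1 j₁) h0 h1 _)
  refine ⟨scheduleAt s, scheduleAt_mem_binaryPoints hx hs hpos, _,
    smul_sub_scheduleAt_mem hx hs hpos hj₀ ha1, a, hpos j₀, ha1, ?_, ?_⟩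
  · rw [smul_smul, mul_inv_cancel₀ (by linarith), one_smul, add_sub_cancel]
  · refine (Set.ssubset_iff_of_subset (Function.support_subset_iff'.2 ?_)).2
      ⟨(j₀, s j₀), (hpos j₀).ne', by simp [scheduleAt, a]⟩
    rintro ⟨j, t⟩ hjt
    have hjt : x j t = 0 := by simpa using hjt
    have hts : t ≠ s j := by rintro rfl; linarith [hpos j]
    simp [scheduleAt, hts, hjt]

section Hull

variable [Fintype J] {d : J → ℕ} {P : Set (J × J)}

lemma binaryPoints_finite : (binaryPoints T d P).Finite :=
  (Set.Finite.pi fun _ => Set.Finite.pi fun _ => Set.toFinite {0, 1}).subset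
    fun _ hy => by simpa [Set.mem_pi] using hy.2

theorem schedulingPolytope_subset_convexHull :
    schedulingPolytope T d P ⊆ convexHull ℝ (binaryPoints T d P) := by
  intro x hx
  induction hn : (Function.uncurry x).support.ncard using Nat.strong_induction_on
    generalizing x with
  | _ n ih =>
  by_cases hb : ∀ j t, x j t = 0 ∨ x j t = 1
  · exact subset_convexHull ℝ _ ⟨hx, hb⟩
  obtain ⟨y, hy, z, hz, a, ha0, ha1, rfl, hzx⟩ := exists_binaryPoints_openSegment hx hb
  exact convex_convexHull ℝ _ (subset_convexHull ℝ _ hy)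
    (ih _ (hn ▸ Set.ncard_lt_ncard hzx) hz rfl) ha0.le (by linarith) (by ring)

theorem binary_of_mem_extremePoints {x : J → Fin T → ℝ}
    (hx : x ∈ (schedulingPolytope T d P).extremePoints ℝ) : ∀ j t, x j t = 0 ∨ x j t = 1 := by
  obtain ⟨hxQ, hext⟩ := mem_extremePoints.1 hx
  by_contra hb
  obtain ⟨y, hy, z, hz, a, ha0, ha1, hxyz, -⟩ := exists_binaryPoints_openSegment hxQ hb
  have hyx := (hext y hy.1 z hz ⟨a, 1 - a, ha0, by linarith, by ring, hxyz.symm⟩).1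
  exact hb (hyx ▸ hy.2)

theorem exists_binaryPoints_forall_le {f : (J → Fin T → ℝ) → ℝ} (hf : IsLinearMap ℝ f)
    (hQ : (schedulingPolytope T d P).Nonempty) :
    ∃ y ∈ binaryPoints T d P, ∀ x ∈ schedulingPolytope T d P, f y ≤ f x := by
  have hB : (binaryPoints T d P).Nonempty :=
    convexHull_nonempty_iff.1 (hQ.mono schedulingPolytope_subset_convexHull)
  obtain ⟨y, hy, hmin⟩ := Set.exists_min_image _ f binaryPoints_finite hB
  exact ⟨y, hy, schedulingPolytope_subset_convexHull.trans
    (convexHull_min hmin (convex_halfSpace_ge hf (f y)))⟩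

end Hull

end SchedulingPolytope

theorem stmt_7_general {J : Type*} [Fintype J] (T : ℕ)
    (d : J → ℕ) (P : Set (J × J)) :
    (∀ x ∈ (schedulingPolytope T d P).extremePoints ℝ, ∀ j t, x j t = 0 ∨ x j t = 1) ∧
    (∀ c : J → Fin T → ℝ, (schedulingPolytope T d P).Nonempty →
      ∃ x ∈ schedulingPolytope T d P, (∀ j t, x j t = 0 ∨ x j t = 1) ∧
        ∀ x' ∈ schedulingPolytope T d P,
          (∑ j, ∑ t, c j t * x j t) ≤ ∑ j, ∑ t, c j t * x' j t) := by
  refine ⟨fun x hx => SchedulingPolytope.binary_of_mem_extremePoints hx, fun c hQ => ?_⟩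
  have hcost : IsLinearMap ℝ fun x : J → Fin T → ℝ => ∑ j, ∑ t, c j t * x j t :=
    ⟨fun x y => by simp [mul_add, sum_add_distrib], fun r x => by simp [mul_sum, mul_left_comm]⟩
  obtain ⟨y, hy, hmin⟩ := SchedulingPolytope.exists_binaryPoints_forall_le hcost hQ
  exact ⟨y, hy.1, hy.2, hmin⟩

/-- Every extreme point of the scheduling polytope `Q` is binary;
consequently, for every cost matrix `c`, if `Q` is nonempty then the linear objective
`∑_{j,t} c j t * x j t` attains its minimum over `Q` at some binary point. -/
theorem stmt_7 {J : Type*} [Fintype J] (T : ℕ) (hT : 0 < T)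
    (d : J → ℕ) (hd : ∀ j, 0 < d j) (P : Set (J × J)) :
    (∀ x ∈ (schedulingPolytope T d P).extremePoints ℝ, ∀ j t, x j t = 0 ∨ x j t = 1) ∧
    (∀ c : J → Fin T → ℝ, (schedulingPolytope T d P).Nonempty →
      ∃ x ∈ schedulingPolytope T d P, (∀ j t, x j t = 0 ∨ x j t = 1) ∧
        ∀ x' ∈ schedulingPolytope T d P,
          (∑ j, ∑ t, c j t * x j t) ≤ ∑ j, ∑ t, c j t * x' j t) :=
  stmt_7_general T d P
end

section
/- Let I be a finite set, let a_i ≥ 0 for all i ∈ I, and let Γ ≥ 0 be a real number. Then the maximum of Σ_{i∈I} a_i δ_i over all δ ∈ [0,1]^I with Σ_{i∈I} δ_i ≤ Γ equals the minimum of Γπ + Σ_{i∈I} η_i over all π ≥ 0 and η ∈ ℝ^I with η_i ≥ 0 and π + η_i ≥ a_i for all i ∈ I, and both optima are attained. -/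
open Finset in
private lemma stmt9_aux {ι : Type*} [DecidableEq ι] (a : ι → ℝ) (ha : ∀ i, 0 ≤ a i) :
    ∀ s : Finset ι, ∀ Γ : ℝ, 0 ≤ Γ →
    ∃ (δ : ι → ℝ) (π : ℝ) (η : ι → ℝ),
      (∀ i ∈ s, δ i ∈ Set.Icc (0:ℝ) 1) ∧ (∑ i ∈ s, δ i) ≤ Γ ∧ 0 ≤ π ∧
      (∀ i ∈ s, 0 ≤ η i) ∧ (∀ i ∈ s, a i ≤ π + η i) ∧
      (π = 0 ∨ ∃ j ∈ s, π = a j) ∧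
      (∑ i ∈ s, a i * δ i) = Γ * π + ∑ i ∈ s, η i := by
  intro s
  induction s using Finset.strongInduction with
  | _ s ih =>
    intro Γ hΓ
    rcases s.eq_empty_or_nonempty with rfl | hs
    · exact ⟨0, 0, 0, by simp, by simpa using hΓ, le_refl 0, by simp, by simp, Or.inl rfl,
        by simp⟩
    · obtain ⟨i₀, hi₀, hmax⟩ := s.exists_max_image a hs
      by_cases hΓ1 : 1 ≤ Γ
      · obtain ⟨δ, π, η, hδ, hδsum, hπ, hη, hdual, hinv, heq⟩ :=
          ih (s.erase i₀) (Finset.erase_ssubset hi₀) (Γ - 1) (by linarith)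
        have hπle : π ≤ a i₀ := by
          rcases hinv with rfl | ⟨j, hj, rfl⟩
          · exact ha i₀
          · exact hmax j (Finset.mem_of_mem_erase hj)
        refine ⟨Function.update δ i₀ 1, π, Function.update η i₀ (a i₀ - π), ?_, ?_, hπ, ?_, ?_,
          ?_, ?_⟩
        · intro i hi
          by_cases h : i = i₀
          · subst h; simp
          · rw [Function.update_of_ne h]; exact hδ i (Finset.mem_erase.2 ⟨h, hi⟩)
        · rw [Finset.sum_update_of_mem hi₀, ← Finset.erase_eq]; linarith
        · intro i hi
          by_cases h : i = i₀
          · subst h; simp; linarith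
          · rw [Function.update_of_ne h]; exact hη i (Finset.mem_erase.2 ⟨h, hi⟩)
        · intro i hi
          by_cases h : i = i₀
          · subst h; simp
          · rw [Function.update_of_ne h]; exact hdual i (Finset.mem_erase.2 ⟨h, hi⟩)
        · rcases hinv with h0 | ⟨j, hj, hjj⟩
          · exact Or.inl h0
          · exact Or.inr ⟨j, Finset.mem_of_mem_erase hj, hjj⟩
        · have h1 : ∑ i ∈ s, a i * Function.update δ i₀ 1 i
              = a i₀ + ∑ i ∈ s.erase i₀, a i * δ i := by
            rw [← Finset.add_sum_erase s _ hi₀, Function.update_self, mul_one]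
            congr 1
            exact Finset.sum_congr rfl fun i hi => by
              rw [Function.update_of_ne (Finset.ne_of_mem_erase hi)]
          rw [h1, Finset.sum_update_of_mem hi₀, ← Finset.erase_eq]
          linear_combination heq
      · refine ⟨fun i => if i = i₀ then Γ else 0, a i₀, 0, ?_, ?_, ha i₀, by simp, ?_,
          Or.inr ⟨i₀, hi₀, rfl⟩, ?_⟩
        · intro i _
          by_cases h : i = i₀ <;> simp [h, hΓ, le_of_not_ge hΓ1]
        · rw [Finset.sum_ite_eq' s i₀ (fun _ => Γ)]
          simp [hi₀]
        · intro i hi; simpa using hmax i hi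
        · have : ∀ i ∈ s, a i * (if i = i₀ then Γ else 0) = if i = i₀ then a i₀ * Γ else 0 := by
            intro i _; by_cases h : i = i₀ <;> simp [h]
          rw [Finset.sum_congr rfl this, Finset.sum_ite_eq' s i₀ (fun _ => a i₀ * Γ)]
          simp [hi₀, mul_comm]

/-- Strong LP duality for the continuous budget polytope: for
nonnegative weights `a` over a finite set and a real budget `Γ ≥ 0`, the maximum of
`∑ a i * δ i` over `δ ∈ [0,1]^I` with `∑ δ i ≤ Γ` equals the minimum of
`Γ * π + ∑ η i` over `π ≥ 0`, `η ≥ 0` with `π + η i ≥ a i` for all `i`, and both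
optima are attained. -/
theorem stmt_9 {ι : Type*} [Fintype ι] (a : ι → ℝ) (ha : ∀ i, 0 ≤ a i)
    (Γ : ℝ) (hΓ : 0 ≤ Γ) :
    ∃ (δ : ι → ℝ) (π : ℝ) (η : ι → ℝ),
      (∀ i, δ i ∈ Set.Icc (0 : ℝ) 1) ∧ (∑ i, δ i) ≤ Γ ∧
      0 ≤ π ∧ (∀ i, 0 ≤ η i) ∧ (∀ i, a i ≤ π + η i) ∧
      (∑ i, a i * δ i) = Γ * π + ∑ i, η i ∧
      (∀ δ' : ι → ℝ, (∀ i, δ' i ∈ Set.Icc (0 : ℝ) 1) → (∑ i, δ' i) ≤ Γ →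
        (∑ i, a i * δ' i) ≤ ∑ i, a i * δ i) ∧
      (∀ (π' : ℝ) (η' : ι → ℝ), 0 ≤ π' → (∀ i, 0 ≤ η' i) →
        (∀ i, a i ≤ π' + η' i) →
        Γ * π + ∑ i, η i ≤ Γ * π' + ∑ i, η' i) := by
  classical
  obtain ⟨δ, π, η, hδ, hδsum, hπ, hη, hdual, _, heq⟩ :=
    stmt9_aux a ha Finset.univ Γ hΓ
  simp only [Finset.mem_univ, forall_true_left] at hδ hη hdual
  -- weak duality
  have weak : ∀ (δ' : ι → ℝ) (π' : ℝ) (η' : ι → ℝ),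
      (∀ i, δ' i ∈ Set.Icc (0:ℝ) 1) → (∑ i, δ' i) ≤ Γ → 0 ≤ π' → (∀ i, 0 ≤ η' i) →
      (∀ i, a i ≤ π' + η' i) → (∑ i, a i * δ' i) ≤ Γ * π' + ∑ i, η' i := by
    intro δ' π' η' hδ' hsum' hπ' hη' hd'
    calc ∑ i, a i * δ' i ≤ ∑ i, (π' + η' i) * δ' i := by
          apply Finset.sum_le_sum
          intro i _
          exact mul_le_mul_of_nonneg_right (hd' i) (hδ' i).1
      _ = π' * ∑ i, δ' i + ∑ i, η' i * δ' i := by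
          rw [Finset.mul_sum, ← Finset.sum_add_distrib]
          exact Finset.sum_congr rfl fun i _ => by ring
      _ ≤ Γ * π' + ∑ i, η' i := by
          have h1 : π' * ∑ i, δ' i ≤ Γ * π' := by
            rw [mul_comm Γ π']
            exact mul_le_mul_of_nonneg_left hsum' hπ'
          have h2 : ∑ i, η' i * δ' i ≤ ∑ i, η' i := by
            apply Finset.sum_le_sum
            intro i _
            nth_rewrite 2 [← mul_one (η' i)]
            exact mul_le_mul_of_nonneg_left (hδ' i).2 (hη' i)
          linarith
  refine ⟨δ, π, η, hδ, hδsum, hπ, hη, hdual, heq, ?_, ?_⟩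
  · intro δ' hδ' hsum'
    rw [heq]
    exact weak δ' π η hδ' hsum' hπ hη hdual
  · intro π' η' hπ' hη' hd'
    rw [← heq]
    exact weak δ π' η' hδ hδsum hπ' hη' hd'
end

section
/- Let J be a finite set of activities with positive integer durations d_j, time horizon 𝒯 = {0,…,T−1}, nominal costs c̄_{jt} ≥ 0, deviations ĉ_{jt} ≥ 0, and budget Γ ≥ 0. Let y ∈ 𝒴, let x ∈ X(y) be a binary time-indexed assignment, and let π ≥ 0 and η ∈ ℝ^{J×𝒯} with η_{jt} ≥ 0 satisfy π + η_{jt} ≥ ĉ_{jt} x_{jt} for all j ∈ J, t ∈ 𝒯. Then sup_{c ∈ U_C(Γ)} min_{x' ∈ X(y)} Σ_{j,t} c_{jt} x'_{jt} ≤ Σ_{j,t} c̄_{jt} x_{jt} + Γπ + Σ_{j,t} η_{jt}; that is, the objective value of any feasible solution of the compact formulation upper-bounds the worst-case second-stage cost of the order encoded by y. -/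
/-- Membership in the set `𝒴` of binary ordering matrices: `y` is binary, has zero
diagonal, satisfies `y i j + y j i = 1` for `i ≠ j`, and the transitivity
inequalities `y i j + y j k ≤ 1 + y i k` for pairwise distinct `i, j, k`. -/
def memY {J : Type*} (y : J → J → ℕ) : Prop :=
  (∀ i j, y i j = 0 ∨ y i j = 1) ∧ (∀ i, y i i = 0) ∧
  (∀ i j, i ≠ j → y i j + y j i = 1) ∧
  (∀ i j k, i ≠ j → j ≠ k → i ≠ k → y i j + y j k ≤ 1 + y i k)

/-- Membership in `X(y)`: binary time-indexed assignment over horizon `{0,…,T-1}`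
(each activity starts exactly once), satisfying the precedence inequalities
`∑_{s=t}^{T-1} x i s + ∑_{s=0}^{min(t+dᵢ-1,T-1)} x j s ≤ 1` for every pair with
`y i j = 1` and every `t`. -/
def memX {J : Type*} [Fintype J] (T : ℕ) (d : J → ℕ) (y : J → J → ℕ)
    (x : J → ℕ → ℕ) : Prop :=
  (∀ j t, x j t = 0 ∨ x j t = 1) ∧
  (∀ j, ∑ t ∈ Finset.range T, x j t = 1) ∧
  (∀ i j, y i j = 1 → ∀ t ∈ Finset.range T,
    (∑ s ∈ Finset.Icc t (T - 1), x i s) +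
      (∑ s ∈ Finset.Icc 0 (min (t + d i - 1) (T - 1)), x j s) ≤ 1)

/-- Total start-time dependent cost `∑_j ∑_{t<T} c j t * x j t` of an assignment. -/
def schedCost {J : Type*} [Fintype J] (T : ℕ) (c : J → ℕ → ℝ)
    (x : J → ℕ → ℕ) : ℝ :=
  ∑ j, ∑ t ∈ Finset.range T, c j t * (x j t : ℝ)

/-- Any feasible solution `(y, x, π, η)` of the compact formulation
upper-bounds the worst-case second-stage cost of the ordering `y` over the continuous
budgeted uncertainty set `U_C(Γ)`:
`sup_{c ∈ U_C(Γ)} min_{x' ∈ X(y)} ∑ c x' ≤ ∑ c̄ x + Γπ + ∑ η`. -/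
theorem stmt_11 {J : Type*} [Fintype J] (T : ℕ) (d : J → ℕ) (hd : ∀ j, 0 < d j)
    (cbar chat : J → ℕ → ℝ) (hcbar : ∀ j t, 0 ≤ cbar j t)
    (hchat : ∀ j t, 0 ≤ chat j t) (Γ : ℝ) (hΓ : 0 ≤ Γ)
    (y : J → J → ℕ) (hy : memY y)
    (x : J → ℕ → ℕ) (hx : memX T d y x)
    (π : ℝ) (hπ : 0 ≤ π) (η : J → ℕ → ℝ) (hη : ∀ j t, 0 ≤ η j t)
    (hcompact : ∀ j : J, ∀ t ∈ Finset.range T, chat j t * (x j t : ℝ) ≤ π + η j t) :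
    sSup {w : ℝ | ∃ δ : J → ℕ → ℝ, (∀ j t, δ j t ∈ Set.Icc (0 : ℝ) 1) ∧
        (∑ j, ∑ t ∈ Finset.range T, δ j t) ≤ Γ ∧
        w = sInf {u : ℝ | ∃ x' : J → ℕ → ℕ, memX T d y x' ∧
          u = schedCost T (fun j t => cbar j t + chat j t * δ j t) x'}} ≤
      schedCost T cbar x + Γ * π + ∑ j, ∑ t ∈ Finset.range T, η j t := by
  have hB0 : 0 ≤ schedCost T cbar x + Γ * π + ∑ j, ∑ t ∈ Finset.range T, η j t := by
    have h1 : 0 ≤ schedCost T cbar x :=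
      Finset.sum_nonneg fun j _ => Finset.sum_nonneg fun t _ =>
        mul_nonneg (hcbar j t) (Nat.cast_nonneg _)
    have h2 : 0 ≤ ∑ j, ∑ t ∈ Finset.range T, η j t :=
      Finset.sum_nonneg fun j _ => Finset.sum_nonneg fun t _ => hη j t
    have := mul_nonneg hΓ hπ
    linarith
  apply Real.sSup_le _ hB0
  rintro w ⟨δ, hδ01, hδΓ, rfl⟩
  set S := {u : ℝ | ∃ x' : J → ℕ → ℕ, memX T d y x' ∧
      u = schedCost T (fun j t => cbar j t + chat j t * δ j t) x'} with hS
  have hbdd : BddBelow S := by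
    refine ⟨0, ?_⟩
    rintro u ⟨x', hx', rfl⟩
    exact Finset.sum_nonneg fun j _ => Finset.sum_nonneg fun t _ =>
      mul_nonneg (add_nonneg (hcbar j t) (mul_nonneg (hchat j t) (hδ01 j t).1))
        (Nat.cast_nonneg _)
  have hmem : schedCost T (fun j t => cbar j t + chat j t * δ j t) x ∈ S := ⟨x, hx, rfl⟩
  refine (csInf_le hbdd hmem).trans ?_
  have key : schedCost T (fun j t => cbar j t + chat j t * δ j t) x ≤
      schedCost T cbar x + ((∑ j, ∑ t ∈ Finset.range T, δ j t) * π
        + ∑ j, ∑ t ∈ Finset.range T, η j t) := by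
    unfold schedCost
    simp only [Finset.sum_mul, ← Finset.sum_add_distrib]
    refine Finset.sum_le_sum fun j _ => Finset.sum_le_sum fun t ht => ?_
    have h1 : chat j t * δ j t * (x j t : ℝ) = δ j t * (chat j t * (x j t : ℝ)) := by ring
    have h2 : δ j t * (chat j t * (x j t : ℝ)) ≤ δ j t * (π + η j t) :=
      mul_le_mul_of_nonneg_left (hcompact j t ht) (hδ01 j t).1
    have h3 : δ j t * η j t ≤ 1 * η j t :=
      mul_le_mul_of_nonneg_right (hδ01 j t).2 (hη j t)
    nlinarith [hδ01 j t]
  have hΓπ : (∑ j, ∑ t ∈ Finset.range T, δ j t) * π ≤ Γ * π :=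
    mul_le_mul_of_nonneg_right hδΓ hπ
  linarith
end

section
/- Let n ≥ 1, K ≥ 1, let c^k ∈ ℕ_0^n for k ∈ {1,…,K}, and let p ∈ ℕ with 1 ≤ p ≤ n. Set M = Σ_{k=1}^{K} Σ_{i=1}^{n} c^k_i + 1. Consider the following single-machine instance: nK + K + 1 unit-duration jobs processed in the fixed order b_0, j(1,1),…,j(n,1), b_1, j(1,2),…,j(n,2), b_2, …, j(1,K),…,j(n,K), b_K, where b_0,…,b_K are blocker jobs and j(i,k) are standard jobs; a time horizon containing two special slots t* and t* + n + 1 with the special region R = {t*+1,…,t*+n}, and n(K−1)+K time slots both before t* and after t*+n+1; base (nominal) per-slot costs equal to 0 for blocker jobs everywhere, 0 for standard jobs on slots in R, and M for standard jobs on slots outside R; and per-time-slot attack deviations equal to c^k_i for job j(i,k) at slot t*+i and 0 for every other job–slot pair. A schedule assigns distinct start slots to the jobs within the horizon, consistent with the given processing order, and its cost under an attack set Δ of time slots is the sum over jobs of the base cost of its slot plus the deviation of that job–slot pair if the slot lies in Δ. Then the adversary's optimal value, max over attack sets Δ with |Δ| ≤ p of the minimum schedule cost, equals n(K−1)·M +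 max_{S ⊆ {1,…,n}, |S| ≤ p} min_{k∈{1,…,K}} Σ_{i∈S} c^k_i. Consequently, there exists S ⊆ {1,…,n} with |S| = p and min_k Σ_{i∈S} c^k_i ≥ V if and only if the adversary's optimal value is at least V + n(K−1)M. -/
lemma aux_key {n a b x y : ℕ} (hx : x ≤ n) (hy : y ≤ n)
    (h : a * (n + 1) + x = b * (n + 1) + y) : a = b ∧ x = y := by
  rcases Nat.lt_trichotomy a b with hab | hab | hab
  · have h1 : (a + 1) * (n + 1) ≤ b * (n + 1) := Nat.mul_le_mul_right (n + 1) hab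
    have h2 : (a + 1) * (n + 1) = a * (n + 1) + (n + 1) := by ring
    omega
  · subst hab; omega
  · have h1 : (b + 1) * (n + 1) ≤ a * (n + 1) := Nat.mul_le_mul_right (n + 1) hab
    have h2 : (b + 1) * (n + 1) = b * (n + 1) + (n + 1) := by ring
    omega

lemma aux_mono_lb {n : ℕ} (g : Fin n → ℕ) (hg : ∀ i j : Fin n, (i : ℕ) < (j : ℕ) → g i < g j)
    (a : ℕ) (ha : ∀ i, a ≤ g i) : ∀ m (hm : m < n), a + m ≤ g ⟨m, hm⟩ := by
  intro m
  induction m with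
  | zero => intro hm; simpa using ha ⟨0, hm⟩
  | succ m ih =>
    intro hm
    have h1 := ih (by omega)
    have h2 := hg ⟨m, by omega⟩ ⟨m + 1, hm⟩ (by simp)
    omega

/-- Correctness of the reduction from max-min selection to the
adversarial problem of the two-stage robust single-machine scheduling problem with
execution-time dependent costs and time-slot attacks, under discrete budgeted
uncertainty with budget `Γ = p`.

Jobs are `Fin (K+1) ⊕ Fin K × Fin n`: blockers `b₀,…,b_K` (left) and standard jobs
`j(i,k)` (right, as pairs `(k,i)`); `pos` encodes the fixed processing order
`b₀, j(1,1),…,j(n,1), b₁, …, j(1,K),…,j(n,K), b_K`.  The horizon has the two special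
slots `t* , t* + n + 1` with the special region `{t*+1,…,t*+n}`, `t* = n(K-1)+K`
slots before and after, base costs `w` (0 for blockers; 0 inside the region and `M`
outside for standard jobs) and per-time-slot attack deviations `wdev` (`c k i` for
job `j(i,k)` at the `i`-th region slot, 0 otherwise).  A schedule assigns distinct
start slots within the horizon, consistent with the processing order; under an
attack set `Δ` of at most `p` slots its cost is
`∑ u, w u (σ u) + (if σ u ∈ Δ then wdev u (σ u) else 0)`.

The adversary's optimal value (max over attacks of the min schedule cost) equals
`n(K-1)·M + max_{|S| ≤ p} min_k ∑_{i ∈ S} c k i`, stated as the existence of an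
attack forcing this cost together with a matching schedule for every attack;
consequently, there is `S` with `|S| = p` and `min_k ∑_{i∈S} c k i ≥ V` iff the
adversary can force cost at least `V + n(K-1)·M`. -/
theorem stmt_15 (n K p : ℕ) (hn : 1 ≤ n) (hK : 1 ≤ K) (hp : 1 ≤ p) (hpn : p ≤ n)
    (c : Fin K → Fin n → ℕ)
    (M : ℕ) (hM : M = (∑ k, ∑ i, c k i) + 1)
    (tstar : ℕ) (htstar : tstar = n * (K - 1) + K)
    (T : ℕ) (hT : T = 2 * tstar + n + 2)
    (pos : Fin (K + 1) ⊕ Fin K × Fin n → ℕ)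
    (hposb : ∀ l : Fin (K + 1), pos (Sum.inl l) = (l : ℕ) * (n + 1))
    (hposs : ∀ (k : Fin K) (i : Fin n),
      pos (Sum.inr (k, i)) = (k : ℕ) * (n + 1) + 1 + (i : ℕ))
    (w : Fin (K + 1) ⊕ Fin K × Fin n → ℕ → ℕ)
    (hwb : ∀ (l : Fin (K + 1)) (t : ℕ), w (Sum.inl l) t = 0)
    (hws : ∀ (k : Fin K) (i : Fin n) (t : ℕ),
      w (Sum.inr (k, i)) t = if tstar + 1 ≤ t ∧ t ≤ tstar + n then 0 else M)
    (wdev : Fin (K + 1) ⊕ Fin K × Fin n → ℕ → ℕ)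
    (hdb : ∀ (l : Fin (K + 1)) (t : ℕ), wdev (Sum.inl l) t = 0)
    (hds : ∀ (k : Fin K) (i : Fin n) (t : ℕ),
      wdev (Sum.inr (k, i)) t = if t = tstar + 1 + (i : ℕ) then c k i else 0)
    (hKne : (Finset.univ : Finset (Fin K)).Nonempty)
    (best : ℕ)
    (hbest : best = (Finset.univ.powerset.filter
        (fun S : Finset (Fin n) => S.card ≤ p)).sup
      (fun S => Finset.univ.inf' hKne (fun k => ∑ i ∈ S, c k i))) :
    ((∃ Δ : Finset ℕ, Δ ⊆ Finset.range T ∧ Δ.card ≤ p ∧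
        ∀ σ : Fin (K + 1) ⊕ Fin K × Fin n → ℕ,
          (∀ u, σ u < T) → Function.Injective σ →
          (∀ u v, pos u < pos v → σ u < σ v) →
          n * (K - 1) * M + best ≤
            ∑ u, (w u (σ u) + if σ u ∈ Δ then wdev u (σ u) else 0)) ∧
      (∀ Δ : Finset ℕ, Δ ⊆ Finset.range T → Δ.card ≤ p →
        ∃ σ : Fin (K + 1) ⊕ Fin K × Fin n → ℕ,
          (∀ u, σ u < T) ∧ Function.Injective σ ∧
          (∀ u v, pos u < pos v → σ u < σ v) ∧
          (∑ u, (w u (σ u) + if σ u ∈ Δ then wdev u (σ u) else 0)) ≤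
            n * (K - 1) * M + best)) ∧
    (∀ V : ℕ,
      (∃ S : Finset (Fin n), S.card = p ∧ ∀ k, V ≤ ∑ i ∈ S, c k i) ↔
      (∃ Δ : Finset ℕ, Δ ⊆ Finset.range T ∧ Δ.card ≤ p ∧
        ∀ σ : Fin (K + 1) ⊕ Fin K × Fin n → ℕ,
          (∀ u, σ u < T) → Function.Injective σ →
          (∀ u v, pos u < pos v → σ u < σ v) →
          V + n * (K - 1) * M ≤
            ∑ u, (w u (σ u) + if σ u ∈ Δ then wdev u (σ u) else 0))) := by
  obtain ⟨K', rfl⟩ : ∃ K', K = K' + 1 := ⟨K - 1, by omega⟩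
  simp only [Nat.add_sub_cancel] at htstar ⊢
  have htn : tstar = n * K' + K' + 1 := by omega
  -- maximizer S₀ for best
  obtain ⟨S₀, hS₀mem, hS₀eq⟩ := Finset.exists_mem_eq_sup
    (Finset.univ.powerset.filter (fun S : Finset (Fin n) => S.card ≤ p))
    ⟨∅, by simp⟩ (fun S => Finset.univ.inf' hKne (fun k => ∑ i ∈ S, c k i))
  rw [← hbest] at hS₀eq
  have hS₀card : S₀.card ≤ p := (Finset.mem_filter.mp hS₀mem).2
  have hbestle : ∀ S : Finset (Fin n), S.card ≤ p →
      Finset.univ.inf' hKne (fun k => ∑ i ∈ S, c k i) ≤ best := by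
    intro S hS
    rw [hbest]
    exact Finset.le_sup (f := fun S : Finset (Fin n) => Finset.univ.inf' hKne (fun k => ∑ i ∈ S, c k i)) (Finset.mem_filter.mpr ⟨Finset.mem_powerset.mpr (Finset.subset_univ S), hS⟩)
  have hcM : ∀ (S : Finset (Fin n)) (k : Fin (K' + 1)), ∑ i ∈ S, c k i < M := by
    intro S k
    have h1 : ∑ i ∈ S, c k i ≤ ∑ i, c k i :=
      Finset.sum_le_sum_of_subset (Finset.subset_univ S)
    have h2 : ∑ i, c k i ≤ ∑ k', ∑ i, c k' i :=
      Finset.single_le_sum (f := fun k' => ∑ i, c k' i) (fun _ _ => Nat.zero_le _)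
        (Finset.mem_univ k)
    omega
  -- injectivity of pos
  have hposinj : Function.Injective pos := by
    rintro (l | ⟨k, i⟩) (l' | ⟨k', i'⟩) huv
    · rw [hposb, hposb] at huv
      have := aux_key (n := n) (a := (l : ℕ)) (b := (l' : ℕ)) (x := 0) (y := 0)
        (by omega) (by omega) (by omega)
      exact congrArg Sum.inl (Fin.ext this.1)
    · rw [hposb, hposs] at huv
      have := aux_key (n := n) (a := (l : ℕ)) (b := (k' : ℕ)) (x := 0) (y := 1 + (i' : ℕ))
        (by omega) (by omega) (by omega)
      omega
    · rw [hposs, hposb] at huv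
      have := aux_key (n := n) (a := (k : ℕ)) (b := (l' : ℕ)) (x := 1 + (i : ℕ)) (y := 0)
        (by omega) (by omega) (by omega)
      omega
    · rw [hposs, hposs] at huv
      have := aux_key (n := n) (a := (k : ℕ)) (b := (k' : ℕ)) (x := 1 + (i : ℕ)) (y := 1 + (i' : ℕ))
        (by omega) (by omega) (by omega)
      have h1 : k = k' := Fin.ext this.1
      have h2 : i = i' := Fin.ext (by omega)
      rw [h1, h2]
  -- the region
  set Rg : Finset ℕ := Finset.image (fun i : Fin n => tstar + 1 + (i : ℕ)) Finset.univ with hRgdef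
  have hRgmem : ∀ t, t ∈ Rg ↔ tstar + 1 ≤ t ∧ t ≤ tstar + n := by
    intro t
    simp only [hRgdef, Finset.mem_image, Finset.mem_univ, true_and]
    constructor
    · rintro ⟨i, hi⟩
      have := i.2
      omega
    · rintro ⟨h1, h2⟩
      exact ⟨⟨t - tstar - 1, by omega⟩, by simp; omega⟩
  have hRgcard : Rg.card = n := by
    rw [hRgdef, Finset.card_image_of_injective _ (fun a b hab => Fin.ext (by omega))]
    simp
  -- the forcing lemma
  have force : ∀ (S : Finset (Fin n)) (σ : Fin (K' + 1 + 1) ⊕ Fin (K' + 1) × Fin n → ℕ),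
      Function.Injective σ → (∀ u v, pos u < pos v → σ u < σ v) →
      ∃ k, n * K' * M + ∑ i ∈ S, c k i ≤
        ∑ u, (w u (σ u) +
          if σ u ∈ S.image (fun i : Fin n => tstar + 1 + (i : ℕ)) then wdev u (σ u) else 0) := by
    intro S σ hinj hmono
    set Δ := S.image (fun i : Fin n => tstar + 1 + (i : ℕ)) with hΔdef
    have hΔmem : ∀ i : Fin n, (tstar + 1 + (i : ℕ) ∈ Δ) ↔ i ∈ S := by
      intro i
      rw [hΔdef]
      simp only [Finset.mem_image]
      constructor
      · rintro ⟨j, hj, hji⟩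
        have hji' : j = i := Fin.ext (by omega)
        exact hji' ▸ hj
      · intro hi; exact ⟨i, hi, rfl⟩
    set f : Fin (K' + 1 + 1) ⊕ Fin (K' + 1) × Fin n → ℕ :=
      fun u => w u (σ u) + if σ u ∈ Δ then wdev u (σ u) else 0 with hfdef
    have hsum : ∑ u, f u = ∑ x : Fin (K' + 1) × Fin n, f (Sum.inr x) := by
      rw [Fintype.sum_sum_type]
      have hz : (∑ l : Fin (K' + 1 + 1), f (Sum.inl l)) = 0 :=
        Finset.sum_eq_zero fun l _ => by simp [hfdef, hwb, hdb]
      rw [hz, zero_add]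
    set A : Finset (Fin (K' + 1) × Fin n) :=
      Finset.univ.filter (fun x => σ (Sum.inr x) ∈ Rg) with hAdef
    have hmemA : ∀ x, x ∈ A ↔ (tstar + 1 ≤ σ (Sum.inr x) ∧ σ (Sum.inr x) ≤ tstar + n) := by
      intro x
      rw [hAdef]
      simp [Finset.mem_filter, hRgmem]
    have houtside : ∀ x : Fin (K' + 1) × Fin n, x ∉ A → M ≤ f (Sum.inr x) := by
      rintro ⟨k, i⟩ hx
      have hnot : ¬(tstar + 1 ≤ σ (Sum.inr (k, i)) ∧ σ (Sum.inr (k, i)) ≤ tstar + n) :=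
        fun hcon => hx ((hmemA _).mpr hcon)
      have hw0 : w (Sum.inr (k, i)) (σ (Sum.inr (k, i))) = M := by rw [hws, if_neg hnot]
      have : M ≤ w (Sum.inr (k, i)) (σ (Sum.inr (k, i))) := le_of_eq hw0.symm
      simp only [hfdef]
      omega
    have hinjA : ∀ x ∈ A, ∀ y ∈ A, σ (Sum.inr x) = σ (Sum.inr y) → x = y :=
      fun x _ y _ h => Sum.inr_injective (hinj h)
    have himgsub : A.image (fun x => σ (Sum.inr x)) ⊆ Rg := by
      intro t ht
      obtain ⟨x, hx, rfl⟩ := Finset.mem_image.mp ht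
      exact (hRgmem _).mpr ((hmemA x).mp hx)
    have hAcard : A.card ≤ n := by
      calc A.card = (A.image (fun x => σ (Sum.inr x))).card :=
            (Finset.card_image_of_injOn hinjA).symm
        _ ≤ Rg.card := Finset.card_le_card himgsub
        _ = n := hRgcard
    have hsplit : ∑ x : Fin (K' + 1) × Fin n, f (Sum.inr x)
        = ∑ x ∈ A, f (Sum.inr x) + ∑ x ∈ Aᶜ, f (Sum.inr x) :=
      (Finset.sum_add_sum_compl A _).symm
    have hcompl : ((K' + 1) * n - A.card) * M ≤ ∑ x ∈ Aᶜ, f (Sum.inr x) := by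
      have h1 : (Aᶜ : Finset (Fin (K' + 1) × Fin n)).card = (K' + 1) * n - A.card := by
        rw [Finset.card_compl]
        simp
      calc ((K' + 1) * n - A.card) * M = ∑ _x ∈ (Aᶜ : Finset (Fin (K' + 1) × Fin n)), M := by
            rw [Finset.sum_const, h1, smul_eq_mul]
        _ ≤ ∑ x ∈ Aᶜ, f (Sum.inr x) :=
            Finset.sum_le_sum (fun x hx => houtside x (Finset.mem_compl.mp hx))
    by_cases hcase : A.card = n
    · -- exactly one block occupies the region, perfectly aligned
      have himg : A.image (fun x => σ (Sum.inr x)) = Rg := by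
        apply Finset.eq_of_subset_of_card_le himgsub
        rw [hRgcard, Finset.card_image_of_injOn hinjA, hcase]
      have hAne : A.Nonempty := Finset.card_pos.mp (by omega)
      obtain ⟨⟨kb, ib⟩, hkb⟩ := hAne
      have hsep : ∀ x y : Fin (K' + 1) × Fin n, x ∈ A → y ∈ A → (x.1 : ℕ) < (y.1 : ℕ) → False := by
        rintro ⟨k1, i1⟩ ⟨k2, i2⟩ hx hy hlt
        obtain ⟨b, hbval⟩ : ∃ b : Fin (K' + 1 + 1), (b : ℕ) = (k1 : ℕ) + 1 :=
          ⟨⟨(k1 : ℕ) + 1, by have := k1.isLt; omega⟩, rfl⟩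
        have hb1 : pos (Sum.inr (k1, i1)) < pos (Sum.inl b) := by
          rw [hposs, hposb, hbval]
          have h2 : ((k1 : ℕ) + 1) * (n + 1) = (k1 : ℕ) * (n + 1) + (n + 1) := by ring
          have := i1.isLt
          omega
        have hb2 : pos (Sum.inl b) < pos (Sum.inr (k2, i2)) := by
          rw [hposs, hposb, hbval]
          have h1 : ((k1 : ℕ) + 1) * (n + 1) ≤ (k2 : ℕ) * (n + 1) :=
            Nat.mul_le_mul_right (n + 1) hlt
          omega
        have hσ1 := hmono _ _ hb1
        have hσ2 := hmono _ _ hb2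
        have hxA := (hmemA _).mp hx
        have hyA := (hmemA _).mp hy
        have hbR : σ (Sum.inl b) ∈ Rg := (hRgmem _).mpr (by omega)
        rw [← himg] at hbR
        obtain ⟨z, hz, hzeq⟩ := Finset.mem_image.mp hbR
        exact absurd (hinj hzeq) (by simp)
      have hallk : ∀ x ∈ A, x.1 = kb := by
        rintro ⟨k, i⟩ hx
        rcases Nat.lt_trichotomy (k : ℕ) (kb : ℕ) with h | h | h
        · exact (hsep _ _ hx hkb h).elim
        · exact Fin.ext h
        · exact (hsep _ _ hkb hx h).elim
      have hAeq : A = Finset.univ.image (fun i : Fin n => (kb, i)) := by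
        apply Finset.eq_of_subset_of_card_le
        · rintro ⟨k, i⟩ hx
          have hk : k = kb := hallk (k, i) hx
          exact Finset.mem_image.mpr ⟨i, Finset.mem_univ i, by rw [hk]⟩
        · rw [Finset.card_image_of_injective _ (fun a b h => by simpa using h), hcase]
          simp
      have hmemblock : ∀ i : Fin n, (kb, i) ∈ A := by
        intro i
        rw [hAeq]
        exact Finset.mem_image.mpr ⟨i, Finset.mem_univ i, rfl⟩
      set g : Fin n → ℕ := fun i => σ (Sum.inr (kb, i)) with hgdef
      have hgmono : ∀ i j : Fin n, (i : ℕ) < (j : ℕ) → g i < g j := by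
        intro i j h
        exact hmono _ _ (by rw [hposs, hposs]; omega)
      have hglb : ∀ i, tstar + 1 ≤ g i := fun i => ((hmemA _).mp (hmemblock i)).1
      have hg1 : ∀ i : Fin n, tstar + 1 + (i : ℕ) ≤ g i := by
        intro i
        have := aux_mono_lb g hgmono (tstar + 1) hglb (i : ℕ) i.isLt
        simpa using this
      have hginj : ∀ x ∈ (Finset.univ : Finset (Fin n)), ∀ y ∈ (Finset.univ : Finset (Fin n)),
          g x = g y → x = y := by
        intro x _ y _ h
        simp only [hgdef] at h
        have := hinj h
        simpa using this
      have himgg : Finset.univ.image g = Rg := by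
        rw [← himg, hAeq, Finset.image_image]
        rfl
      have hgsum : ∑ i : Fin n, (tstar + 1 + (i : ℕ)) = ∑ i : Fin n, g i := by
        have e1 : ∑ t ∈ Finset.univ.image g, t = ∑ i : Fin n, g i :=
          Finset.sum_image hginj
        have e2 : ∑ t ∈ Rg, t = ∑ i : Fin n, (tstar + 1 + (i : ℕ)) := by
          rw [hRgdef]
          exact Finset.sum_image (fun a _ b _ h => Fin.ext (by omega))
        rw [← e1, himgg, e2]
      have hgeq : ∀ i : Fin n, g i = tstar + 1 + (i : ℕ) := by
        intro i
        have := (Finset.sum_eq_sum_iff_of_le (fun i _ => hg1 i)).mp hgsum i (Finset.mem_univ i)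
        omega
      have hAval : ∑ x ∈ A, f (Sum.inr x) = ∑ i ∈ S, c kb i := by
        rw [hAeq, Finset.sum_image (fun a _ b _ h => by simpa using h)]
        have hterm : ∀ i : Fin n, f (Sum.inr (kb, i)) = if i ∈ S then c kb i else 0 := by
          intro i
          have hgi : σ (Sum.inr (kb, i)) = tstar + 1 + (i : ℕ) := hgeq i
          simp only [hfdef]
          rw [hgi, hws, hds, if_pos (by have := i.isLt; omega :
            tstar + 1 ≤ tstar + 1 + (i : ℕ) ∧ tstar + 1 + (i : ℕ) ≤ tstar + n),
            if_pos (rfl : tstar + 1 + (i : ℕ) = tstar + 1 + (i : ℕ)), zero_add]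
          by_cases hiS : i ∈ S
          · rw [if_pos ((hΔmem i).mpr hiS), if_pos hiS]
          · rw [if_neg (fun hc => hiS ((hΔmem i).mp hc)), if_neg hiS]
        rw [Finset.sum_congr rfl fun i _ => hterm i, Finset.sum_ite_mem, Finset.univ_inter]
      refine ⟨kb, ?_⟩
      rw [hsum, hsplit, hAval]
      have h9 : (K' + 1) * n - A.card = n * K' := by
        have he : (K' + 1) * n = n * K' + n := by ring
        omega
      rw [h9] at hcompl
      omega
    · -- fewer than n standard jobs in the region: cost at least (n(K-1)+1)M
      refine ⟨⟨0, by omega⟩, ?_⟩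
      rw [hsum, hsplit]
      have h9 : n * K' + 1 ≤ (K' + 1) * n - A.card := by
        have he : (K' + 1) * n = n * K' + n := by ring
        omega
      have h10 : (n * K' + 1) * M ≤ ((K' + 1) * n - A.card) * M :=
        Nat.mul_le_mul_right M h9
      have h11 : (n * K' + 1) * M = n * K' * M + M := by ring
      have h12 := hcM S ⟨0, by omega⟩
      omega
  -- the construction lemma
  have build : ∀ (Δ : Finset ℕ) (k₀ : Fin (K' + 1)),
      ∃ σ : Fin (K' + 1 + 1) ⊕ Fin (K' + 1) × Fin n → ℕ,
        (∀ u, σ u < T) ∧ Function.Injective σ ∧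
        (∀ u v, pos u < pos v → σ u < σ v) ∧
        (∑ u, (w u (σ u) + if σ u ∈ Δ then wdev u (σ u) else 0)) =
          n * K' * M +
            ∑ i ∈ Finset.univ.filter (fun i : Fin n => tstar + 1 + (i : ℕ) ∈ Δ), c k₀ i := by
    intro Δ k₀
    have hk₀le : (k₀ : ℕ) * (n + 1) + 1 ≤ tstar := by
      have h1 : (k₀ : ℕ) * (n + 1) ≤ K' * (n + 1) := Nat.mul_le_mul_right _ (by omega)
      have h2 : K' * (n + 1) = n * K' + K' := by ring
      omega
    set D := tstar - (k₀ : ℕ) * (n + 1) with hDdef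
    have hDeq : (k₀ : ℕ) * (n + 1) + D = tstar := by omega
    refine ⟨fun u => pos u + D, ?_, ?_, ?_, ?_⟩
    · intro u
      have hub : pos u ≤ (K' + 1) * (n + 1) := by
        rcases u with l | ⟨k, i⟩
        · rw [hposb]; exact Nat.mul_le_mul_right _ (by omega)
        · rw [hposs]
          have h1 : (k : ℕ) * (n + 1) ≤ K' * (n + 1) := Nat.mul_le_mul_right _ (by omega)
          have h2 : (K' + 1) * (n + 1) = K' * (n + 1) + (n + 1) := by ring
          have := i.2
          omega
      have h3 : (K' + 1) * (n + 1) = n * K' + n + K' + 1 := by ring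
      simp only
      omega
    · intro a b hab
      simp only at hab
      exact hposinj (by omega)
    · intro u v h
      simp only
      omega
    · have hterm : ∀ (k : Fin (K' + 1)) (i : Fin n),
          (w (Sum.inr (k, i)) (pos (Sum.inr (k, i)) + D) +
            if pos (Sum.inr (k, i)) + D ∈ Δ then wdev (Sum.inr (k, i)) (pos (Sum.inr (k, i)) + D)
            else 0)
          = if k = k₀ then (if tstar + 1 + (i : ℕ) ∈ Δ then c k i else 0) else M := by
        intro k i
        rw [hposs, hws, hds]
        by_cases hk : k = k₀
        · subst hk
          have hσ : (k : ℕ) * (n + 1) + 1 + (i : ℕ) + D = tstar + 1 + (i : ℕ) := by omega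
          rw [hσ]
          have := i.2
          rw [if_pos (by omega : tstar + 1 ≤ tstar + 1 + (i : ℕ) ∧ tstar + 1 + (i : ℕ) ≤ tstar + n),
            if_pos (rfl : tstar + 1 + (i : ℕ) = tstar + 1 + (i : ℕ))]
          simp
        · have hkk : (k : ℕ) ≠ (k₀ : ℕ) := fun h => hk (Fin.ext h)
          have hout : ¬(tstar + 1 ≤ (k : ℕ) * (n + 1) + 1 + (i : ℕ) + D ∧
              (k : ℕ) * (n + 1) + 1 + (i : ℕ) + D ≤ tstar + n) ∧
              (k : ℕ) * (n + 1) + 1 + (i : ℕ) + D ≠ tstar + 1 + (i : ℕ) := by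
            rcases Nat.lt_or_ge (k : ℕ) (k₀ : ℕ) with h | h
            · have h1 : ((k : ℕ) + 1) * (n + 1) ≤ (k₀ : ℕ) * (n + 1) :=
                Nat.mul_le_mul_right (n + 1) h
              have h2 : ((k : ℕ) + 1) * (n + 1) = (k : ℕ) * (n + 1) + (n + 1) := by ring
              have := i.2
              omega
            · have h' : (k₀ : ℕ) < k := by omega
              have h1 : ((k₀ : ℕ) + 1) * (n + 1) ≤ (k : ℕ) * (n + 1) :=
                Nat.mul_le_mul_right (n + 1) h'
              have h2 : ((k₀ : ℕ) + 1) * (n + 1) = (k₀ : ℕ) * (n + 1) + (n + 1) := by ring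
              omega
          rw [if_neg hout.1, if_neg hout.2, if_neg hk]
          simp
      simp only [Fintype.sum_sum_type, Fintype.sum_prod_type]
      have h5 : (∑ l : Fin (K' + 1 + 1),
          (w (Sum.inl l) (pos (Sum.inl l) + D) +
            if pos (Sum.inl l) + D ∈ Δ then wdev (Sum.inl l) (pos (Sum.inl l) + D) else 0)) = 0 :=
        Finset.sum_eq_zero fun l _ => by rw [hwb, hdb]; simp
      rw [h5, Finset.sum_congr rfl fun k _ => Finset.sum_congr rfl fun i _ => hterm k i]
      rw [Fintype.sum_eq_add_sum_compl k₀]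
      have e1 : (∑ i : Fin n,
          if k₀ = k₀ then (if tstar + 1 + (i : ℕ) ∈ Δ then c k₀ i else 0) else M)
          = ∑ i ∈ Finset.univ.filter (fun i : Fin n => tstar + 1 + (i : ℕ) ∈ Δ), c k₀ i := by
        rw [Finset.sum_filter]
        simp
      have e2 : (∑ k ∈ ({k₀}ᶜ : Finset (Fin (K' + 1))), ∑ i : Fin n,
          if k = k₀ then (if tstar + 1 + (i : ℕ) ∈ Δ then c k i else 0) else M)
          = K' * (n * M) := by
        rw [Finset.sum_congr rfl (fun k hk => Finset.sum_congr rfl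
          (fun i _ => if_neg (by simpa using hk)))]
        rw [Finset.sum_const, Finset.sum_const, Finset.card_compl]
        simp [mul_comm]
      rw [e1, e2]
      have : K' * (n * M) = n * K' * M := by ring
      omega
  -- part 1, adversary side
  have adv : ∃ Δ : Finset ℕ, Δ ⊆ Finset.range T ∧ Δ.card ≤ p ∧
      ∀ σ : Fin (K' + 1 + 1) ⊕ Fin (K' + 1) × Fin n → ℕ,
        (∀ u, σ u < T) → Function.Injective σ →
        (∀ u v, pos u < pos v → σ u < σ v) →
        n * K' * M + best ≤
          ∑ u, (w u (σ u) + if σ u ∈ Δ then wdev u (σ u) else 0) := by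
    refine ⟨S₀.image (fun i : Fin n => tstar + 1 + (i : ℕ)), ?_, ?_, ?_⟩
    · intro t ht
      obtain ⟨i, _, rfl⟩ := Finset.mem_image.mp ht
      have := i.2
      simp only [Finset.mem_range]
      omega
    · calc (S₀.image (fun i : Fin n => tstar + 1 + (i : ℕ))).card ≤ S₀.card :=
            Finset.card_image_le
        _ ≤ p := hS₀card
    · intro σ hσT hσinj hσmono
      obtain ⟨k, hk⟩ := force S₀ σ hσinj hσmono
      have hinfle : best ≤ ∑ i ∈ S₀, c k i := by
        rw [hS₀eq]
        exact Finset.inf'_le _ (Finset.mem_univ k)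
      omega
  -- part 1, scheduler side
  have sched : ∀ Δ : Finset ℕ, Δ ⊆ Finset.range T → Δ.card ≤ p →
      ∃ σ : Fin (K' + 1 + 1) ⊕ Fin (K' + 1) × Fin n → ℕ,
        (∀ u, σ u < T) ∧ Function.Injective σ ∧
        (∀ u v, pos u < pos v → σ u < σ v) ∧
        (∑ u, (w u (σ u) + if σ u ∈ Δ then wdev u (σ u) else 0)) ≤
          n * K' * M + best := by
    intro Δ hΔT hΔp
    set Sδ : Finset (Fin n) := Finset.univ.filter (fun i : Fin n => tstar + 1 + (i : ℕ) ∈ Δ)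
      with hSδ
    have hSδcard : Sδ.card ≤ p := by
      have himg : Sδ.image (fun i : Fin n => tstar + 1 + (i : ℕ)) ⊆ Δ := by
        intro t ht
        obtain ⟨i, hi, rfl⟩ := Finset.mem_image.mp ht
        exact (Finset.mem_filter.mp hi).2
      calc Sδ.card = (Sδ.image (fun i : Fin n => tstar + 1 + (i : ℕ))).card :=
            (Finset.card_image_of_injective _ (fun a b hab => Fin.ext (by omega))).symm
        _ ≤ Δ.card := Finset.card_le_card himg
        _ ≤ p := hΔp
    obtain ⟨k₀, _, hk₀⟩ := Finset.exists_mem_eq_inf' hKne (fun k => ∑ i ∈ Sδ, c k i)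
    obtain ⟨σ, h1, h2, h3, h4⟩ := build Δ k₀
    refine ⟨σ, h1, h2, h3, ?_⟩
    rw [h4, ← hSδ]
    have : ∑ i ∈ Sδ, c k₀ i ≤ best := by
      rw [← hk₀]
      exact hbestle Sδ hSδcard
    omega
  refine ⟨⟨adv, sched⟩, ?_⟩
  intro V
  constructor
  · rintro ⟨S, hScard, hSV⟩
    obtain ⟨Δ, h1, h2, h3⟩ := adv
    refine ⟨Δ, h1, h2, fun σ a b c' => ?_⟩
    have hVbest : V ≤ best := by
      calc V ≤ Finset.univ.inf' hKne (fun k => ∑ i ∈ S, c k i) :=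
            Finset.le_inf' hKne _ (fun k _ => hSV k)
        _ ≤ best := hbestle S (by omega)
    have := h3 σ a b c'
    omega
  · rintro ⟨Δ, hΔT, hΔp, hΔ⟩
    obtain ⟨σ, h1, h2, h3, h4⟩ := sched Δ hΔT hΔp
    have hVbest : V ≤ best := by
      have := hΔ σ h1 h2 h3
      omega
    obtain ⟨S₁, hS₁sub, hS₁card⟩ :=
      Finset.exists_superset_card_eq hS₀card (by simp [hpn])
    refine ⟨S₁, hS₁card, fun k => ?_⟩
    calc V ≤ best := hVbest
      _ ≤ ∑ i ∈ S₀, c k i := by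
          rw [hS₀eq]; exact Finset.inf'_le _ (Finset.mem_univ k)
      _ ≤ ∑ i ∈ S₁, c k i := Finset.sum_le_sum_of_subset hS₁sub
end
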